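/- Fix an integer j ≥ 0. For π chosen uniformly at random from PF_n, let R(π) = #{i ∈ {1, …, n−1} : π_i = π_{i+1}} be the number of repeats of π read left to right. Then P(R(π) = j) converges to 1/(e·j!) as n → ∞. -/

import Mathlib

/-- A parking function of size `n`, encoded as a list of length `n` with entries in
`{1, …, n}` such that for each `1 ≤ i ≤ n` at least `i` entries are `≤ i`. -/
def IsPFList (n : ℕ) (l : List ℕ) : Prop :=
  l.length = n ∧ (∀ x ∈ l, 1 ≤ x ∧ x ≤ n) ∧
  ∀ i : ℕ, 1 ≤ i → i ≤ n → i ≤ (l.filter (fun x => x ≤ i)).length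


/-- The number of repeats `π_i = π_{i+1}` of a list, read left to right. -/
def repeatCount (l : List ℕ) : ℕ :=
  ((l.zip l.tail).filter (fun p => p.1 = p.2)).length

/-!
Encode a parking function of size `n` as a map `w : Fin n → ZMod (n + 1)` through the
representatives `0, …, n`. By Pollak's circle argument every map has exactly one translate
`c + w` that is a parking function: `c + w` parks iff the walk
`t ↦ ∑_{s < t} (#w⁻¹(s) - 1)` of `w`, which drops by exactly `1` over each period `n + 1`,
does not go below its value at `1 - c` during the next `n` steps, and the cycle lemma
provides exactly one such starting point. Repeats are invariant under translation, and maps with `j`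
repeats are counted through their successive differences, so that
`#{π ∈ PF_n | R π = j} = (n - 1).choose j * n ^ (n - 1 - j)`. Thus `R` is binomial with
parameters `n - 1` and `1 / (n + 1)`, and the Poisson limit theorem gives `1 / (e * j!)`.
-/

open Finset Filter Topology

lemma length_filter_ofFn {α : Type*} {n : ℕ} (f : Fin n → α) (p : α → Bool) :
    ((List.ofFn f).filter p).length = #{i | p (f i)} := by
  rw [List.ofFn_eq_map, List.filter_map, List.length_map, Fin.univ_def, card_def, filter_val,
    Multiset.filter_coe, Multiset.coe_card]
  simp [Function.comp_def]

lemma zip_ofFn_tail {α : Type*} {M : ℕ} (f : Fin (M + 1) → α) :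
    (List.ofFn f).zip (List.ofFn f).tail = List.ofFn fun i : Fin M => (f i.castSucc, f i.succ) := by
  apply List.ext_getElem
  · simp
  · intro i h₁ h₂
    simp only [List.getElem_zip, List.getElem_tail, List.getElem_ofFn]
    rfl

lemma card_filter_card_filter_eq {ι β : Type*} [Fintype ι] [DecidableEq ι] [Fintype β]
    [DecidableEq β] (b : β) (j : ℕ) :
    #{d : ι → β | #{i | d i = b} = j} =
      (Fintype.card ι).choose j * (Fintype.card β - 1) ^ (Fintype.card ι - j) := by
  have hfiber : ∀ S : Finset ι, #{d : ι → β | ({i | d i = b} : Finset ι) = S} =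
      (Fintype.card β - 1) ^ (Fintype.card ι - #S) := by
    intro S
    have hpi : ({d : ι → β | ({i | d i = b} : Finset ι) = S} : Finset (ι → β)) =
        Fintype.piFinset fun i => if i ∈ S then {b} else {b}ᶜ := by
      ext d
      simp only [mem_filter, mem_univ, true_and, Fintype.mem_piFinset, Finset.ext_iff]
      refine forall_congr' fun i => ?_
      split_ifs with hi <;> simp [hi]
    rw [hpi, Fintype.card_piFinset]
    simp_rw [apply_ite card, card_singleton, card_compl, card_singleton]
    rw [prod_ite, prod_const_one, one_mul, prod_const, filter_not, card_sdiff]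
    simp
  rw [card_eq_sum_card_fiberwise (f := fun d => ({i | d i = b} : Finset ι))
    (t := powersetCard j univ) (by intro d hd; simp_all [mem_powersetCard]),
    sum_const_nat (m := (Fintype.card β - 1) ^ (Fintype.card ι - j)), card_powersetCard,
    card_univ]
  intro S hS
  rw [mem_powersetCard] at hS
  rw [filter_filter, ← hS.2, ← hfiber S]
  congr 1
  exact filter_congr fun d _ => ⟨fun h => h.2, fun h => ⟨by rw [h, hS.2], h⟩⟩

section RepeatCountFn

variable {α : Type*} [DecidableEq α] {M : ℕ}

def repeatCountFn (w : Fin (M + 1) → α) : ℕ := #{i : Fin M | w i.castSucc = w i.succ}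

lemma repeatCount_ofFn (f : Fin (M + 1) → ℕ) : repeatCount (List.ofFn f) = repeatCountFn f := by
  rw [repeatCount, zip_ofFn_tail, length_filter_ofFn, repeatCountFn]
  simp

lemma repeatCountFn_comp_injective {β : Type*} [DecidableEq β] {f : α → β} (hf : f.Injective)
    (w : Fin (M + 1) → α) : repeatCountFn (f ∘ w) = repeatCountFn w := by
  simp [repeatCountFn, hf.eq_iff]

variable [AddGroup α]

lemma repeatCountFn_vadd (c : α) (w : Fin (M + 1) → α) :
    repeatCountFn (c +ᵥ w) = repeatCountFn w := by
  simp [repeatCountFn]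

omit [DecidableEq α] in
lemma bijective_diff_head [Fintype α] :
    Function.Bijective fun w : Fin (M + 1) → α =>
      (fun i : Fin M => w i.succ - w i.castSucc, w 0) := by
  rw [Fintype.bijective_iff_injective_and_card]
  refine ⟨fun w w' h => funext fun i => ?_, by simp [pow_succ]⟩
  simp only [Prod.mk.injEq, funext_iff] at h
  induction i using Fin.induction with
  | zero => exact h.2
  | succ i ih => simpa [ih] using h.1 i

lemma card_repeatCountFn_eq [Fintype α] (M j : ℕ) :
    Nat.card {w : Fin (M + 1) → α // repeatCountFn w = j} =
      M.choose j * (Nat.card α - 1) ^ (M - j) * Nat.card α := by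
  let e := Equiv.ofBijective _ (bijective_diff_head (α := α) (M := M))
  have he : ∀ w, repeatCountFn w = j ↔ #{i | (e w).1 i = 0} = j := fun w => by
    simp [e, repeatCountFn, sub_eq_zero, eq_comm]
  rw [Nat.card_congr ((e.subtypeEquiv he).trans
      (Equiv.prodSubtypeFstEquivSubtypeProd (p := fun d : Fin M → α => #{i | d i = 0} = j))),
    Nat.card_prod, Nat.card_eq_fintype_card, Fintype.card_subtype, card_filter_card_filter_eq,
    Fintype.card_fin, Nat.card_eq_fintype_card]

end RepeatCountFn

lemma card_eq_card_mul_card_of_existsUnique_vadd {G X : Type*} [AddGroup G] [AddAction G X]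
    {P R : X → Prop} (hP : ∀ x, ∃! g : G, P (g +ᵥ x)) (hR : ∀ (g : G) x, R (g +ᵥ x) ↔ R x) :
    Nat.card {x // R x} = Nat.card G * Nat.card {x // P x ∧ R x} := by
  let Ψ : G × {x // P x ∧ R x} → {x // R x} := fun p => ⟨p.1 +ᵥ p.2.1, (hR _ _).2 p.2.2.2⟩
  have hΨ : Function.Bijective Ψ := by
    refine ⟨?_, fun ⟨x, hx⟩ => ?_⟩
    · rintro ⟨g, x, hx⟩ ⟨g', x', hx'⟩ h
      have hxx' : x' = (-g' + g) +ᵥ x := by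
        rw [add_vadd, eq_neg_vadd_iff]
        exact (congrArg Subtype.val h).symm
      obtain ⟨g₀, -, huniq⟩ := hP x
      have hgg' : -g' + g = 0 :=
        (huniq _ (show P ((-g' + g) +ᵥ x) from hxx' ▸ hx'.1)).trans
          (huniq 0 (by simpa using hx.1)).symm
      obtain rfl : g' = g := by simpa [neg_add_eq_zero] using hgg'
      obtain rfl : x = x' := by simpa using hxx'.symm
      rfl
    · obtain ⟨g, hg, -⟩ := hP x
      exact ⟨(-g, ⟨g +ᵥ x, hg, (hR g x).2 hx⟩), Subtype.ext (neg_vadd_vadd g x)⟩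
  rw [← Nat.card_congr (Equiv.ofBijective Ψ hΨ), Nat.card_prod]

lemma cycle_lemma {f : ℕ → ℤ} {m : ℕ} (hf : ∀ x, f (x + m) = f x - 1) :
    ∃! p, p < m ∧ ∀ s, 0 < s → s < m → f p ≤ f (p + s) := by
  have hm : 0 < m := Nat.pos_of_ne_zero fun h => by
    have := hf 0
    rw [h, add_zero] at this
    omega
  refine existsUnique_of_exists_of_unique ?_ ?_
  · -- the first minimiser `p` of `f` on `[0, m)` works: past `m`, `f (p + s) = f z - 1` for
    -- some `z < p`, and `f p < f z` because `p` is the first minimiser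
    have hmin : ∃ p, p < m ∧ ∀ y < m, f p ≤ f y := by
      obtain ⟨p, hp, hmin⟩ := (range m).exists_min_image f ⟨0, mem_range.2 hm⟩
      exact ⟨p, mem_range.1 hp, fun y hy => hmin y (mem_range.2 hy)⟩
    classical
    obtain ⟨hp, hpmin⟩ := Nat.find_spec hmin
    refine ⟨Nat.find hmin, hp, fun s _ hs => ?_⟩
    by_cases hwrap : Nat.find hmin + s < m
    · exact hpmin _ hwrap
    · set z := Nat.find hmin + s - m
      have hz : z < Nat.find hmin := by omega
      have hfz : f (Nat.find hmin) < f z := by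
        by_contra! h
        exact Nat.find_min hmin hz ⟨by omega, fun y hy => h.trans (hpmin y hy)⟩
      have := hf z
      rw [show z + m = Nat.find hmin + s by omega] at this
      omega
  · -- two such points `a < b` would give `f a ≤ f b ≤ f (a + m) = f a - 1`
    have not_both : ∀ a b, a < b → b < m → (∀ s, 0 < s → s < m → f a ≤ f (a + s)) →
        ¬ ∀ s, 0 < s → s < m → f b ≤ f (b + s) := by
      intro a b hab hb ha hb'
      have h₁ := ha (b - a) (by omega) (by omega)
      have h₂ := hb' (a + m - b) (by omega) (by omega)
      rw [Nat.add_sub_cancel' hab.le] at h₁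
      rw [show b + (a + m - b) = a + m by omega, hf] at h₂
      omega
    rintro a b ⟨ha, hfa⟩ ⟨hb, hfb⟩
    rcases lt_trichotomy a b with hab | rfl | hab
    · exact (not_both a b hab hb hfa hfb).elim
    · rfl
    · exact (not_both b a hab ha hfb hfa).elim

section ExcessWalk

variable {ι : Type*} [Fintype ι] {m : ℕ} [NeZero m] (u : ι → ZMod m)

def excessWalk (t : ℕ) : ℤ := ∑ s ∈ range t, ((#{k | u k = s} : ℤ) - 1)

lemma card_val_sub_lt (p : ℕ) {i : ℕ} (hi : i ≤ m) :
    #{k | (u k - p).val < i} = ∑ s ∈ range i, #{k | u k = (p + s : ℕ)} := by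
  rw [card_eq_sum_card_fiberwise (f := fun k => (u k - p).val) (t := range i)
    (fun k hk => by simpa using hk)]
  refine sum_congr rfl fun s hs => ?_
  have hsi : s < i := mem_range.1 hs
  rw [filter_filter]
  refine congrArg card (filter_congr fun k _ => ⟨?_, fun h => ?_⟩)
  · rintro ⟨-, h⟩
    rw [Nat.cast_add, ← h, ZMod.natCast_zmod_val, add_sub_cancel]
  · simp [h, ZMod.val_cast_of_lt (hsi.trans_le hi), hsi]

lemma excessWalk_add (p : ℕ) {i : ℕ} (hi : i ≤ m) :
    excessWalk u (p + i) = excessWalk u p + #{k | (u k - p).val < i} - i := by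
  rw [excessWalk, sum_range_add, ← excessWalk, sum_sub_distrib, ← Nat.cast_sum,
    ← card_val_sub_lt u p hi, sum_const, card_range, nsmul_one, add_sub_assoc]

lemma le_card_iff_excessWalk_le (p : ℕ) {i : ℕ} (hi : i ≤ m) :
    i ≤ #{k | (u k - p).val < i} ↔ excessWalk u p ≤ excessWalk u (p + i) := by
  rw [excessWalk_add u p hi]
  omega

lemma excessWalk_add_period (t : ℕ) :
    excessWalk u (t + m) = excessWalk u t + Fintype.card ι - m := by
  rw [excessWalk_add u t le_rfl, filter_true_of_mem fun k _ => ZMod.val_lt _, card_univ]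

end ExcessWalk

lemma isPFList_ofFn_iff {n : ℕ} (g : Fin n → ℕ) :
    IsPFList n (List.ofFn g) ↔ ∀ i, 1 ≤ i → i ≤ n → i ≤ #{k | g k ∈ Icc 1 i} := by
  have hcount : ∀ i, (∀ k, 1 ≤ g k) →
      ((List.ofFn g).filter (· ≤ i)).length = #{k | g k ∈ Icc 1 i} := by
    intro i hg
    rw [length_filter_ofFn]
    exact congrArg card (filter_congr fun k _ => by simp [hg k])
  simp only [IsPFList, List.length_ofFn, List.forall_mem_ofFn_iff, true_and]
  constructor
  · rintro ⟨hg, hcard⟩ i hi₁ hin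
    rw [← hcount i fun k => (hg k).1]
    exact hcard i hi₁ hin
  · intro hcard
    have hg : ∀ k, g k ∈ Icc 1 n := fun k => by
      have hall : #{k | g k ∈ Icc 1 n} = #(univ : Finset (Fin n)) :=
        ((card_filter_le _ _).trans (by simp)).antisymm (by simpa using hcard n k.pos le_rfl)
      exact card_filter_eq_iff.1 hall k (mem_univ k)
    refine ⟨fun k => mem_Icc.1 (hg k), fun i hi₁ hin => ?_⟩
    rw [hcount i fun k => (mem_Icc.1 (hg k)).1]
    exact hcard i hi₁ hin

lemma val_sub_one_lt_iff {n i : ℕ} (x : ZMod (n + 1)) (hi : i ≤ n) :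
    (x - 1).val < i ↔ x.val ∈ Icc 1 i := by
  rcases eq_or_ne x 0 with rfl | hx
  · simpa [ZMod.val_neg_one] using hi
  · have hx₁ : 1 ≤ x.val := Nat.one_le_iff_ne_zero.2 ((ZMod.val_ne_zero x).2 hx)
    have h1 : (1 : ZMod (n + 1)).val = 1 := ZMod.val_one'' (by
      have := ZMod.val_lt x
      omega)
    rw [ZMod.val_sub (h1.symm ▸ hx₁), h1, mem_Icc]
    omega

def valList {n : ℕ} (w : Fin n → ZMod (n + 1)) : List ℕ := List.ofFn fun k => (w k).val

lemma isPFList_valList_vadd_iff {n : ℕ} (w : Fin n → ZMod (n + 1)) (c : ZMod (n + 1)) :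
    IsPFList n (valList (c +ᵥ w)) ↔
      ∀ s, 0 < s → s < n + 1 → excessWalk w (1 - c).val ≤ excessWalk w ((1 - c).val + s) := by
  have hcount : ∀ i ≤ n, #{k | ((c +ᵥ w) k).val ∈ Icc 1 i} =
      #{k | (w k - ((1 - c).val : ℕ)).val < i} := fun i hi => by
    refine congrArg card (filter_congr fun k _ => ?_)
    rw [ZMod.natCast_zmod_val, ← val_sub_one_lt_iff _ hi, Pi.vadd_apply, vadd_eq_add,
      sub_sub_eq_add_sub, add_comm (w k)]
  rw [valList, isPFList_ofFn_iff]
  refine forall_congr' fun i => ⟨fun h hi hin => ?_, fun h hi hin => ?_⟩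
  · rw [← le_card_iff_excessWalk_le _ _ (by omega), ← hcount i (by omega)]
    exact h hi (by omega)
  · rw [hcount i hin, le_card_iff_excessWalk_le _ _ (by omega)]
    exact h hi (by omega)

lemma existsUnique_isPFList_vadd {n : ℕ} (w : Fin n → ZMod (n + 1)) :
    ∃! c : ZMod (n + 1), IsPFList n (valList (c +ᵥ w)) := by
  obtain ⟨p, ⟨hp, hpmin⟩, huniq⟩ := cycle_lemma (f := excessWalk w) (m := n + 1) fun t => by
    rw [excessWalk_add_period, Fintype.card_fin]
    push_cast
    ring
  have hval : ∀ c : ZMod (n + 1), (1 - c).val = p ↔ c = 1 - p := fun c => by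
    constructor
    · rintro rfl
      rw [ZMod.natCast_zmod_val, sub_sub_cancel]
    · rintro rfl
      rw [sub_sub_cancel, ZMod.val_cast_of_lt hp]
  refine ⟨1 - p, (isPFList_valList_vadd_iff w _).2 ?_, fun c hc =>
    (hval c).1 (huniq _ ⟨ZMod.val_lt _, (isPFList_valList_vadd_iff w c).1 hc⟩)⟩
  rwa [(hval _).2 rfl]

lemma valList_injective {n : ℕ} : Function.Injective (valList (n := n)) := fun _ _ h =>
  funext fun k => ZMod.val_injective _ (congrFun (List.ofFn_injective h) k)

lemma mem_range_valList {n : ℕ} {l : List ℕ} (hl : IsPFList n l) :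
    l ∈ Set.range (valList (n := n)) := by
  obtain ⟨hlen, hle, -⟩ := hl
  refine ⟨fun k => (l[k.cast hlen.symm] : ZMod (n + 1)),
    List.ext_getElem (by simp [valList, hlen]) fun i h₁ h₂ => ?_⟩
  simp only [valList, List.getElem_ofFn]
  exact ZMod.val_cast_of_lt (Nat.lt_succ_of_le (hle _ (List.getElem_mem h₂)).2)

lemma repeatCount_valList {M : ℕ} (w : Fin (M + 1) → ZMod (M + 1 + 1)) :
    repeatCount (valList w) = repeatCountFn w := by
  rw [valList, repeatCount_ofFn]
  exact repeatCountFn_comp_injective (ZMod.val_injective _) w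

lemma card_isPFList_repeatCountFn (M j : ℕ) :
    Nat.card {w : Fin (M + 1) → ZMod (M + 1 + 1) //
        IsPFList (M + 1) (valList w) ∧ repeatCountFn w = j} =
      M.choose j * (M + 1) ^ (M - j) := by
  have h := card_eq_card_mul_card_of_existsUnique_vadd
    (P := fun w => IsPFList (M + 1) (valList w))
    (R := fun w : Fin (M + 1) → ZMod (M + 1 + 1) => repeatCountFn w = j)
    existsUnique_isPFList_vadd (fun c w => by rw [repeatCountFn_vadd])
  rw [card_repeatCountFn_eq, Nat.card_zmod, Nat.add_sub_cancel, mul_comm] at h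
  exact (Nat.eq_of_mul_eq_mul_left (by omega) h).symm

lemma ncard_isPFList_repeatCount (M j : ℕ) :
    {l | IsPFList (M + 1) l ∧ repeatCount l = j}.ncard = M.choose j * (M + 1) ^ (M - j) := by
  rw [← Set.ncard_preimage_of_injective_subset_range valList_injective
    fun l hl => mem_range_valList hl.1, ← Nat.card_coe_set_eq]
  simp only [Set.preimage_ofPred_eq, repeatCount_valList]
  exact card_isPFList_repeatCountFn M j

theorem stmt14 (j : ℕ) :
    Filter.Tendsto
      (fun n : ℕ =>
        (Set.ncard {l : List ℕ | IsPFList n l ∧ repeatCount l = j} : ℝ) /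
          ((n : ℝ) + 1) ^ (n - 1))
      Filter.atTop (nhds (1 / (Real.exp 1 * (Nat.factorial j : ℝ)))) := by
  have hp : Tendsto (fun M : ℕ => (M : ℝ) * (1 / ((M : ℝ) + 2))) atTop (𝓝 1) := by
    simpa [div_eq_mul_inv] using tendsto_natCast_div_add_atTop (2 : ℝ)
  have hbinom := ProbabilityTheory.tendsto_choose_mul_pow_of_tendsto_mul_atTop j hp
  rw [Real.exp_neg, one_pow, mul_one, inv_eq_one_div, div_div] at hbinom
  rw [← tendsto_add_atTop_iff_nat 1]
  refine hbinom.congr' ?_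
  filter_upwards [eventually_ge_atTop j] with M hM
  obtain ⟨k, rfl⟩ := Nat.exists_eq_add_of_le hM
  have hx : ((j + k : ℕ) : ℝ) + 2 ≠ 0 := by positivity
  rw [Nat.add_sub_cancel, ncard_isPFList_repeatCount, Nat.add_sub_cancel_left, one_sub_div hx,
    div_pow, div_pow, one_pow]
  push_cast
  field_simp
  ring
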